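/- arXiv:2511.12531 — 7 statements merged into one kernel-verified Lean document; each statement's English description precedes it below -/
import Mathlib

section
/- For every nontrivial finite-dimensional Lie algebra C over a field K of characteristic 0, there exists a short exact sequence of Lie algebras 0 → A → B → C → 0 such that B is not isomorphic (as a Lie algebra) to the direct sum A ⊕ C. -/
section LieProd
variable (K : Type*) [CommRing K] (A C : Type*) [LieRing A] [LieRing C]

instance Prod.instLieRing : LieRing (A × C) where
  bracket x y := (⁅x.1, y.1⁆, ⁅x.2, y.2⁆)
  add_lie x y z := by ext <;> simp [add_lie]
  lie_add x y z := by ext <;> simp [lie_add]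
  lie_self x := by ext <;> simp
  leibniz_lie x y z := by ext <;> simp

@[simp] lemma Prod.lie_def (x y : A × C) : ⁅x, y⁆ = (⁅x.1, y.1⁆, ⁅x.2, y.2⁆) := rfl

instance Prod.instLieAlgebraProd [LieAlgebra K A] [LieAlgebra K C] : LieAlgebra K (A × C) where
  lie_smul t x y := by ext <;> simp

end LieProd

/-- A short exact sequence of Lie algebras 0 → A → B → C → 0 (an extension of C)
that does not split trivially, i.e. B ≇ A ⊕ C as Lie algebras. -/
structure NonTrivialExtensionOf (K : Type u) [Field K] [CharZero K]
    (C : Type u) [LieRing C] [LieAlgebra K C] : Type (u + 1) where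
  A : Type u
  B : Type u
  [lieRingA : LieRing A]
  [lieAlgebraA : LieAlgebra K A]
  [finiteA : Module.Finite K A]
  [lieRingB : LieRing B]
  [lieAlgebraB : LieAlgebra K B]
  [finiteB : Module.Finite K B]
  ι : A →ₗ⁅K⁆ B
  π : B →ₗ⁅K⁆ C
  inj : Function.Injective ι
  surj : Function.Surjective π
  exact : ∀ b : B, π b = 0 ↔ b ∈ Set.range ι
  not_trivially_split : IsEmpty (B ≃ₗ⁅K⁆ A × C)

/-! Let `ρ` be a nonzero representation of `C` on its own underlying space `V`: the adjoint
representation if `C` is not abelian, and a nonzero linear form times the identity if it is.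
Take `B = V ⋊_ρ C` with `V` abelian. The projection `B → C` maps `[B, B]` onto `[C, C]` and kills
the nonzero vectors `ρ x v ∈ [B, B]`, so `dim [B, B] > dim [C, C]`. In `V × C` the derived algebra
is `0 × [C, C]`, and the dimension of the derived algebra is an isomorphism invariant. -/

universe u

open LieAlgebra Module

attribute [local instance 100] LieRing.ofAssociativeRing

section DerivedAlgebra

variable {K L L' : Type*} [Field K] [LieRing L] [LieAlgebra K L] [LieRing L'] [LieAlgebra K L']
  [Module.Finite K L]

theorem LieHom.finrank_derivedSeries_one_add_finrank_inf_ker {f : L →ₗ⁅K⁆ L'}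
    (hf : Function.Surjective f) :
    finrank K (derivedSeries K L' 1) + finrank K ↥(derivedSeries K L 1 ⊓ f.ker) =
      finrank K (derivedSeries K L 1) := by
  set D := LieSubmodule.toSubmodule (derivedSeries K L 1)
  let g : D →ₗ[K] L' := (f : L →ₗ[K] L').domRestrict D
  have hrange : LinearMap.range g = LieSubmodule.toSubmodule (derivedSeries K L' 1) := by
    rw [LinearMap.range_domRestrict, ← LieIdeal.coe_map_of_surjective hf,
      LieIdeal.derivedSeries_map_eq 1 hf]
  have hker : LinearMap.ker g = (D ⊓ LieSubmodule.toSubmodule f.ker).comap D.subtype := by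
    rw [LinearMap.ker_domRestrict, Submodule.comap_inf, Submodule.comap_subtype_self, top_inf_eq]
    rfl
  have := g.finrank_range_add_finrank_ker
  rw [hrange, hker, (Submodule.comapSubtypeEquivOfLe inf_le_left).finrank_eq] at this
  exact this

end DerivedAlgebra

section Abelian

variable {R L : Type*} [CommRing R] [LieRing L] [LieAlgebra R L] [IsLieAbelian L]

def LieDerivation.ofIsLieAbelian : Module.End R L →ₗ⁅R⁆ LieDerivation R L L where
  toFun D :=
    { toLinearMap := D
      leibniz' _ _ := by simp only [trivial_lie_zero, sub_zero, map_zero] }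
  map_add' _ _ := rfl
  map_smul' _ _ := rfl
  map_lie' := rfl

end Abelian

def AbelianLieAlgebra (V : Type*) : Type _ := V

namespace AbelianLieAlgebra

variable (R V : Type*) [CommRing R] [AddCommGroup V] [Module R V]

instance : AddCommGroup (AbelianLieAlgebra V) := inferInstanceAs (AddCommGroup V)

instance : Module R (AbelianLieAlgebra V) := inferInstanceAs (Module R V)

instance [Module.Finite R V] : Module.Finite R (AbelianLieAlgebra V) :=
  inferInstanceAs (Module.Finite R V)

instance : LieRing (AbelianLieAlgebra V) where
  bracket _ _ := 0
  add_lie _ _ _ := (add_zero 0).symm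
  lie_add _ _ _ := (add_zero 0).symm
  lie_self _ := rfl
  leibniz_lie _ _ _ := (add_zero 0).symm

instance : LieAlgebra R (AbelianLieAlgebra V) where
  lie_smul _ _ _ := (smul_zero _).symm

instance : IsLieAbelian (AbelianLieAlgebra V) := ⟨fun _ _ => rfl⟩

end AbelianLieAlgebra

theorem exists_lieHom_end_ne_zero (K C : Type*) [Field K] [LieRing C] [LieAlgebra K C]
    [Nontrivial C] : ∃ ρ : C →ₗ⁅K⁆ Module.End K C, ρ ≠ 0 := by
  by_cases hC : IsLieAbelian C
  · obtain ⟨f, hf⟩ : ∃ f : Module.Dual K C, f ≠ 0 := exists_ne 0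
    refine ⟨(Algebra.ofId K (Module.End K C)).toLieHom.comp (lieCharacterEquivLinearDual.symm f),
      fun h => hf ?_⟩
    ext c
    obtain ⟨v, hv⟩ := exists_ne (0 : C)
    have hcv : f c • v = 0 := congr($h c v)
    exact (smul_eq_zero.1 hcv).resolve_right hv
  · refine ⟨ad K C, fun h => hC ⟨fun x y => ?_⟩⟩
    simpa using congr($h x y)

theorem LieAlgebra.derivedSeries_one_prod_inf_ker_snd_eq_bot {R A L : Type*} [CommRing R]
    [LieRing A] [LieAlgebra R A] [LieRing L] [LieAlgebra R L] [IsLieAbelian A] :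
    derivedSeries R (A × L) 1 ⊓ (LieHom.snd R A L).ker = ⊥ := by
  have hfst : derivedSeries R (A × L) 1 ≤ (LieHom.fst R A L).ker := by
    rw [← LieIdeal.map_eq_bot_iff, eq_bot_iff]
    exact (LieIdeal.derivedSeries_map_le 1).trans (LieSubmodule.trivial_lie_oper_zero _ _).le
  rw [eq_bot_iff]
  rintro x ⟨hx₁, hx₂⟩
  exact Prod.ext (hfst hx₁) hx₂

namespace LieAlgebra.SemiDirectSum

section

variable {R M L : Type*} [CommRing R] [LieRing M] [LieAlgebra R M] [LieRing L] [LieAlgebra R L]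
  (ψ : L →ₗ⁅R⁆ LieDerivation R M M)

instance [Module.Finite R M] [Module.Finite R L] : Module.Finite R (M ⋊⁅ψ⁆ L) :=
  Module.Finite.equiv (toProdl ψ).symm

theorem derivedSeries_one_inf_ker_projr_ne_bot (hψ : ψ ≠ 0) :
    derivedSeries R (M ⋊⁅ψ⁆ L) 1 ⊓ (projr ψ).ker ≠ ⊥ := by
  obtain ⟨x, m, hxm⟩ : ∃ x m, ψ x m ≠ 0 := by
    by_contra! h
    exact hψ (LieHom.ext fun x => LieDerivation.ext (h x))
  rw [Ne, LieSubmodule.eq_bot_iff]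
  push Not
  refine ⟨⁅inr ψ x, inl ψ m⁆, ⟨?_, ?_⟩, ?_⟩
  · exact LieSubmodule.lie_mem_lie (LieSubmodule.mem_top _) (LieSubmodule.mem_top _)
  · simp
  · simpa using hxm

end

theorem isEmpty_lieEquiv_prod {K M L : Type*} [Field K] [LieRing M] [LieAlgebra K M]
    [LieRing L] [LieAlgebra K L] [Module.Finite K M] [Module.Finite K L] [IsLieAbelian M]
    {ψ : L →ₗ⁅K⁆ LieDerivation K M M} (hψ : ψ ≠ 0) :
    IsEmpty ((M ⋊⁅ψ⁆ L) ≃ₗ⁅K⁆ M × L) := by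
  refine ⟨fun e => ?_⟩
  have hB := (projr ψ).finrank_derivedSeries_one_add_finrank_inf_ker (projr_surjective ψ)
  have hP := (LieHom.snd K M L).finrank_derivedSeries_one_add_finrank_inf_ker
    (LieHom.snd_surjective (R := K))
  have he := (e.symm : M × L →ₗ⁅K⁆ M ⋊⁅ψ⁆ L).finrank_derivedSeries_one_add_finrank_inf_ker
    e.symm.surjective
  have hker : finrank K ↥(derivedSeries K (M ⋊⁅ψ⁆ L) 1 ⊓ (projr ψ).ker) ≠ 0 :=
    have := (LieSubmodule.nontrivial_iff_ne_bot K _ _).2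
      (derivedSeries_one_inf_ker_projr_ne_bot ψ hψ)
    finrank_pos.ne'
  rw [derivedSeries_one_prod_inf_ker_snd_eq_bot,
    finrank_zero_of_subsingleton (M := (⊥ : LieIdeal K (M × L)))] at hP
  rw [(LieHom.ker_eq_bot _).2 e.symm.injective, inf_bot_eq,
    finrank_zero_of_subsingleton (M := (⊥ : LieIdeal K (M × L)))] at he
  omega

end LieAlgebra.SemiDirectSum

def NonTrivialExtensionOf.ofIsExtension {K C A B : Type u} [Field K] [CharZero K] [LieRing C]
    [LieAlgebra K C] [LieRing A] [LieAlgebra K A] [Module.Finite K A] [LieRing B] [LieAlgebra K B]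
    [Module.Finite K B] (ι : A →ₗ⁅K⁆ B) (π : B →ₗ⁅K⁆ C) [IsExtension ι π]
    (h : IsEmpty (B ≃ₗ⁅K⁆ A × C)) : NonTrivialExtensionOf K C where
  A := A
  B := B
  ι := ι
  π := π
  inj := (LieHom.ker_eq_bot ι).1 (IsExtension.ker_eq_bot π)
  surj := (LieHom.range_eq_top π).1 (IsExtension.range_eq_top ι)
  exact := (LieHom.range_eq_ker_iff ι π).1 IsExtension.exact
  not_trivially_split := h

/-- every nontrivial finite-dimensional Lie algebra C over a field of
characteristic 0 admits an extension 0 → A → B → C → 0 with B ≇ A ⊕ C. -/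
theorem exists_nonsplit_extension_of_nontrivial
    (K : Type u) [Field K] [CharZero K]
    (C : Type u) [LieRing C] [LieAlgebra K C] [Module.Finite K C] [Nontrivial C] :
    Nonempty (NonTrivialExtensionOf K C) := by
  obtain ⟨ρ, hρ⟩ := exists_lieHom_end_ne_zero K C
  let ψ : C →ₗ⁅K⁆ LieDerivation K (AbelianLieAlgebra C) (AbelianLieAlgebra C) :=
    LieDerivation.ofIsLieAbelian.comp ρ
  have hψ : ψ ≠ 0 := fun h => hρ (LieHom.ext fun x => LinearMap.ext fun v => congr($h x v))
  exact ⟨.ofIsExtension (SemiDirectSum.inl ψ) (SemiDirectSum.projr ψ)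
    (SemiDirectSum.isEmpty_lieEquiv_prod hψ)⟩
end

section
/- The direct sum of two complete Lie algebras is complete: if A₁ and A₂ are Lie algebras with trivial center and all derivations inner, then A₁ ⊕ A₂ has trivial center and all derivations of A₁ ⊕ A₂ are inner. -/
/-!
The centre of `A₁ × A₂` is the product of the centres. For a derivation `D` of `A₁ × A₂`,
applying `D` to `⁅(0, y), (x, 0)⁆ = 0` shows that the off-diagonal block `x ↦ (D (x, 0)).2`
takes values in the centre of `A₂`, and symmetrically; so when both centres vanish, `D` is
block diagonal, its diagonal blocks are derivations of `A₁` and `A₂`, and if these are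
`ad a₁` and `ad a₂` then `D = ad (a₁, a₂)`.
-/

section ProdDerivation

variable {R A C : Type*} [CommRing R] [LieRing A] [LieAlgebra R A] [LieRing C] [LieAlgebra R C]

namespace LieAlgebra

lemma mem_center_prod {z : A × C} :
    z ∈ center R (A × C) ↔ z.1 ∈ center R A ∧ z.2 ∈ center R C := by
  simp only [LieModule.mem_maxTrivSubmodule, Prod.lie_def, Prod.ext_iff, Prod.fst_zero,
    Prod.snd_zero]
  exact ⟨fun h => ⟨fun x => (h (x, 0)).1, fun y => (h (0, y)).2⟩,
    fun h x => ⟨h.1 x.1, h.2 x.2⟩⟩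

lemma center_prod_eq_bot (hA : center R A = ⊥) (hC : center R C = ⊥) :
    center R (A × C) = ⊥ := by
  refine (LieSubmodule.eq_bot_iff _).mpr fun z hz => ?_
  obtain ⟨h₁, h₂⟩ := mem_center_prod.mp hz
  rw [hA, LieSubmodule.mem_bot] at h₁
  rw [hC, LieSubmodule.mem_bot] at h₂
  exact Prod.ext h₁ h₂

end LieAlgebra

namespace LieDerivation

variable (D : LieDerivation R (A × C) (A × C))

def restrictFst : LieDerivation R A A where
  toLinearMap := LinearMap.fst R A C ∘ₗ (D : A × C →ₗ[R] A × C) ∘ₗ LinearMap.inl R A C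
  leibniz' a b := by simpa using congrArg Prod.fst (D.apply_lie_eq_sub (a, 0) (b, 0))

def restrictSnd : LieDerivation R C C where
  toLinearMap := LinearMap.snd R A C ∘ₗ (D : A × C →ₗ[R] A × C) ∘ₗ LinearMap.inr R A C
  leibniz' a b := by simpa using congrArg Prod.snd (D.apply_lie_eq_sub (0, a) (0, b))

@[simp] lemma restrictFst_apply (x : A) : D.restrictFst x = (D (x, 0)).1 := rfl

@[simp] lemma restrictSnd_apply (y : C) : D.restrictSnd y = (D (0, y)).2 := rfl

lemma snd_apply_inl_mem_center (x : A) : (D (x, 0)).2 ∈ LieAlgebra.center R C :=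
  (LieModule.mem_maxTrivSubmodule R C C _).mpr fun y => by
    simpa [Prod.mk_zero_zero] using (congrArg Prod.snd (D.apply_lie_eq_sub (0, y) (x, 0))).symm

lemma fst_apply_inr_mem_center (y : C) : (D (0, y)).1 ∈ LieAlgebra.center R A :=
  (LieModule.mem_maxTrivSubmodule R A A _).mpr fun x => by
    simpa [Prod.mk_zero_zero] using (congrArg Prod.fst (D.apply_lie_eq_sub (x, 0) (0, y))).symm

lemma apply_eq_restrictFst_restrictSnd (hA : LieAlgebra.center R A = ⊥)
    (hC : LieAlgebra.center R C = ⊥) (z : A × C) :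
    D z = (D.restrictFst z.1, D.restrictSnd z.2) := by
  have h₁ : (D (0, z.2)).1 = 0 := by
    simpa [hA] using D.fst_apply_inr_mem_center z.2
  have h₂ : (D (z.1, 0)).2 = 0 := by
    simpa [hC] using D.snd_apply_inl_mem_center z.1
  have hz : z = (z.1, 0) + (0, z.2) := by simp
  rw [hz, map_add]
  ext <;> simp [h₁, h₂]

lemma exists_eq_ad_prod (hA : LieAlgebra.center R A = ⊥) (hC : LieAlgebra.center R C = ⊥)
    (hDA : ∀ D : LieDerivation R A A, ∃ a, D = ad R A a)
    (hDC : ∀ D : LieDerivation R C C, ∃ c, D = ad R C c) :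
    ∃ z, D = ad R (A × C) z := by
  obtain ⟨a, ha⟩ := hDA D.restrictFst
  obtain ⟨c, hc⟩ := hDC D.restrictSnd
  refine ⟨(a, c), ext fun z => ?_⟩
  rw [D.apply_eq_restrictFst_restrictSnd hA hC, ha, hc]
  simp

end LieDerivation

end ProdDerivation

theorem prod_complete_of_complete_general
    (K : Type*) [Field K]
    (A₁ A₂ : Type*)
    [LieRing A₁] [LieAlgebra K A₁]
    [LieRing A₂] [LieAlgebra K A₂]
    (hZ₁ : LieAlgebra.center K A₁ = ⊥)
    (hD₁ : ∀ D : LieDerivation K A₁ A₁, ∃ a : A₁, D = LieDerivation.ad K A₁ a)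
    (hZ₂ : LieAlgebra.center K A₂ = ⊥)
    (hD₂ : ∀ D : LieDerivation K A₂ A₂, ∃ a : A₂, D = LieDerivation.ad K A₂ a) :
    LieAlgebra.center K (A₁ × A₂) = ⊥ ∧
      ∀ D : LieDerivation K (A₁ × A₂) (A₁ × A₂),
        ∃ a : A₁ × A₂, D = LieDerivation.ad K (A₁ × A₂) a :=
  ⟨LieAlgebra.center_prod_eq_bot hZ₁ hZ₂, fun D => D.exists_eq_ad_prod hZ₁ hZ₂ hD₁ hD₂⟩

/-- the direct sum of two complete Lie algebras is complete: if A₁ and A₂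
have trivial center and only inner derivations, so does A₁ ⊕ A₂ (with componentwise
bracket). -/
theorem prod_complete_of_complete
    (K : Type*) [Field K] [CharZero K]
    (A₁ A₂ : Type*)
    [LieRing A₁] [LieAlgebra K A₁] [Module.Finite K A₁]
    [LieRing A₂] [LieAlgebra K A₂] [Module.Finite K A₂]
    (hZ₁ : LieAlgebra.center K A₁ = ⊥)
    (hD₁ : ∀ D : LieDerivation K A₁ A₁, ∃ a : A₁, D = LieDerivation.ad K A₁ a)
    (hZ₂ : LieAlgebra.center K A₂ = ⊥)
    (hD₂ : ∀ D : LieDerivation K A₂ A₂, ∃ a : A₂, D = LieDerivation.ad K A₂ a) :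
    LieAlgebra.center K (A₁ × A₂) = ⊥ ∧
      ∀ D : LieDerivation K (A₁ × A₂) (A₁ × A₂),
        ∃ a : A₁ × A₂, D = LieDerivation.ad K (A₁ × A₂) a :=
  prod_complete_of_complete_general K A₁ A₂ hZ₁ hD₁ hZ₂ hD₂
end

section
/- Let A be a complete Lie algebra (trivial center and every derivation inner). Then every short exact sequence of Lie algebras 0 → A →ι B →π V → 0 with V a finite-dimensional abelian Lie algebra splits trivially, i.e., B is isomorphic to the Lie algebra direct sum A ⊕ V. -/
namespace LieDerivation

variable {K A : Type*} [CommRing K] [LieRing A] [LieAlgebra K A]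

noncomputable def adEquivOfComplete (hcenter : LieAlgebra.center K A = ⊥)
    (hder : ∀ D : LieDerivation K A A, ∃ a : A, D = ad K A a) :
    A ≃ₗ⁅K⁆ LieDerivation K A A :=
  LieEquiv.ofBijective (ad K A)
    ⟨injective_ad_of_center_eq_bot hcenter, fun D => (hder D).imp fun _ h => h.symm⟩

end LieDerivation

namespace LieHom

variable {K A B : Type*} [CommRing K] [LieRing A] [LieAlgebra K A] [LieRing B] [LieAlgebra K B]
  (ι : A →ₗ⁅K⁆ B) (hι : Function.Injective ι)
  (hideal : ∀ (b : B) (x : A), ⁅b, ι x⁆ ∈ Set.range ι)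

noncomputable def adRestrict (b : B) : A →ₗ[K] A :=
  (LinearEquiv.ofInjective ι.toLinearMap hι).symm.toLinearMap ∘ₗ
    ((LieModule.toEnd K B B b) ∘ₗ ι.toLinearMap).codRestrict _ (hideal b)

variable {ι hι hideal} in
@[simp]
lemma apply_adRestrict (b : B) (x : A) : ι (adRestrict ι hι hideal b x) = ⁅b, ι x⁆ :=
  LinearEquiv.ofInjective_symm_apply (h := hι) _ _

noncomputable def adDerivation : B →ₗ⁅K⁆ LieDerivation K A A where
  toFun b :=
    { toLinearMap := adRestrict ι hι hideal b
      leibniz' x y := hι <| by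
        rw [map_sub, LieHom.map_lie, LieHom.map_lie, apply_adRestrict, apply_adRestrict,
          apply_adRestrict, LieHom.map_lie, leibniz_lie, ← lie_skew ⁅b, ι x⁆]
        abel }
  map_add' b b' := by ext x; apply hι; simp [add_lie]
  map_smul' t b := by ext x; apply hι; simp [smul_lie]
  map_lie' {b b'} := by ext x; apply hι; simp [lie_lie]

lemma adDerivation_apply_self (x : A) :
    adDerivation ι hι hideal (ι x) = LieDerivation.ad K A x := by
  ext y; apply hι; simp [adDerivation]

variable (hcenter : LieAlgebra.center K A = ⊥)
  (hder : ∀ D : LieDerivation K A A, ∃ a : A, D = LieDerivation.ad K A a)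

noncomputable def retractionOfComplete : B →ₗ⁅K⁆ A :=
  (LieDerivation.adEquivOfComplete hcenter hder).symm.toLieHom.comp (adDerivation ι hι hideal)

lemma leftInverse_retractionOfComplete :
    Function.LeftInverse (retractionOfComplete ι hι hideal hcenter hder) ι := by
  intro x
  simp only [retractionOfComplete, coe_comp, Function.comp_apply, adDerivation_apply_self]
  exact (LieDerivation.adEquivOfComplete hcenter hder).symm_apply_apply x

end LieHom

namespace Function.Exact

variable {K A B V : Type*} [CommRing K] [LieRing A] [LieAlgebra K A] [LieRing B] [LieAlgebra K B]
  [LieRing V] [LieAlgebra K V] {ι : A →ₗ⁅K⁆ B} {π : B →ₗ⁅K⁆ V}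

lemma lie_mem_range (h : Function.Exact ι π) (b : B) (x : A) : ⁅b, ι x⁆ ∈ Set.range ι :=
  (h _).1 (by rw [π.map_lie, h.apply_apply_eq_zero, lie_zero])

noncomputable def splitInjectiveLieEquiv (h : Function.Exact ι π) (hπ : Function.Surjective π)
    (φ : B →ₗ⁅K⁆ A) (hφ : Function.LeftInverse φ ι) : B ≃ₗ⁅K⁆ A × V :=
  LieEquiv.ofBijective (φ.prod π)
    (h.splitInjectiveEquiv (f := ι.toLinearMap) hπ ⟨φ.toLinearMap, LinearMap.ext hφ⟩).1.bijective

end Function.Exact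

theorem cocentral_extension_trivial_split_of_complete_general
    (K : Type*) [Field K]
    (A B V : Type*)
    [LieRing A] [LieAlgebra K A]
    [LieRing B] [LieAlgebra K B]
    [LieRing V] [LieAlgebra K V]
    (hcenter : LieAlgebra.center K A = ⊥)
    (hder : ∀ D : LieDerivation K A A, ∃ a : A, D = LieDerivation.ad K A a)
    (ι : A →ₗ⁅K⁆ B) (π : B →ₗ⁅K⁆ V)
    (hι : Function.Injective ι) (hπ : Function.Surjective π)
    (hexact : ∀ b : B, π b = 0 ↔ b ∈ Set.range ι) :
    Nonempty (B ≃ₗ⁅K⁆ A × V) := by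
  have h : Function.Exact ι π := hexact
  exact ⟨h.splitInjectiveLieEquiv hπ _
    (LieHom.leftInverse_retractionOfComplete ι hι h.lie_mem_range hcenter hder)⟩

/-- If A is a complete Lie algebra (trivial center, all derivations inner),
then every short exact sequence 0 → A →ι B →π V → 0 with V finite-dimensional abelian
splits trivially: B ≅ A ⊕ V. -/
theorem cocentral_extension_trivial_split_of_complete
    (K : Type*) [Field K] [CharZero K]
    (A B V : Type*)
    [LieRing A] [LieAlgebra K A] [Module.Finite K A]
    [LieRing B] [LieAlgebra K B] [Module.Finite K B]
    [LieRing V] [LieAlgebra K V] [Module.Finite K V] [IsLieAbelian V]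
    (hcenter : LieAlgebra.center K A = ⊥)
    (hder : ∀ D : LieDerivation K A A, ∃ a : A, D = LieDerivation.ad K A a)
    (ι : A →ₗ⁅K⁆ B) (π : B →ₗ⁅K⁆ V)
    (hι : Function.Injective ι) (hπ : Function.Surjective π)
    (hexact : ∀ b : B, π b = 0 ↔ b ∈ Set.range ι) :
    Nonempty (B ≃ₗ⁅K⁆ A × V) :=
  cocentral_extension_trivial_split_of_complete_general K A B V hcenter hder ι π hι hπ hexact
end

section
/- Let A be a finite-dimensional solvable Lie algebra over a field of characteristic 0 such that every short exact sequence 0 → A → B → V → 0 with V abelian splits trivially (B ≅ A ⊕ V). Then A is complete: Z(A) = 0 and every derivation of A is inner. -/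
attribute [local instance 100] LieRing.ofAssociativeRing

open Module LieAlgebra

instance CommRing.instIsLieAbelian (R : Type*) [CommRing R] : IsLieAbelian R :=
  isMulCommutative_iff_isLieAbelian.mp inferInstance

instance Prod.instIsLieAbelian (L L' : Type*) [LieRing L] [LieRing L'] [IsLieAbelian L]
    [IsLieAbelian L'] : IsLieAbelian (L × L') :=
  ⟨fun x y => by ext <;> simp [trivial_lie_zero]⟩

section CommRing

variable {R L L' : Type*} [CommRing R] [LieRing L] [LieAlgebra R L] [LieRing L'] [LieAlgebra R L']

lemma LieEquiv.apply_mem_center_iff (e : L ≃ₗ⁅R⁆ L') {x : L} :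
    e x ∈ center R L' ↔ x ∈ center R L := by
  simp only [LieModule.mem_maxTrivSubmodule]
  refine ⟨fun h y => e.injective ?_, fun h y => ?_⟩
  · simpa using h (e y)
  · simpa [h] using (e.map_lie (e.symm y) x).symm

lemma LieEquiv.finrank_center_eq (e : L ≃ₗ⁅R⁆ L') :
    finrank R (center R L) = finrank R (center R L') :=
  (e.toLinearEquiv.ofSubmodules (center R L).toSubmodule (center R L').toSubmodule
    (by ext y; exact (Submodule.mem_map_equiv ..).trans e.symm.apply_mem_center_iff)).finrank_eq

lemma LieAlgebra.mem_center_prod_iff {x : L × L'} :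
    x ∈ center R (L × L') ↔ x.1 ∈ center R L ∧ x.2 ∈ center R L' := by
  simp only [LieModule.mem_maxTrivSubmodule]
  exact ⟨fun h => ⟨fun a => congrArg Prod.fst (h (a, 0)), fun b => congrArg Prod.snd (h (0, b))⟩,
    fun h y => Prod.ext (h.1 y.1) (h.2 y.2)⟩

def LieAlgebra.centerProdEquiv : center R (L × L') ≃ₗ[R] center R L × center R L' where
  toFun x := (⟨x.1.1, (mem_center_prod_iff.1 x.2).1⟩, ⟨x.1.2, (mem_center_prod_iff.1 x.2).2⟩)
  invFun p := ⟨(p.1, p.2), mem_center_prod_iff.2 ⟨p.1.2, p.2.2⟩⟩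
  map_add' _ _ := rfl
  map_smul' _ _ := rfl
  left_inv _ := rfl
  right_inv _ := rfl

def LieDerivation.toSpanSingleton (D : LieDerivation R L L) : R →ₗ⁅R⁆ LieDerivation R L L where
  __ := LinearMap.toSpanSingleton R _ D
  map_lie' {s t} := by simp [trivial_lie_zero]

@[simp] lemma LieDerivation.toSpanSingleton_apply (D : LieDerivation R L L) (t : R) :
    D.toSpanSingleton t = t • D := rfl

namespace LieAlgebra.SemiDirectSum

instance instModuleFinite [Module.Finite R L] [Module.Finite R L']
    (ψ : L' →ₗ⁅R⁆ LieDerivation R L L) : Module.Finite R (L ⋊⁅ψ⁆ L') :=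
  Module.Finite.equiv (toProdl ψ).symm

lemma projr_eq_zero_iff (ψ : L' →ₗ⁅R⁆ LieDerivation R L L) (x : L ⋊⁅ψ⁆ L') :
    projr ψ x = 0 ↔ x ∈ Set.range (inl ψ) := by
  refine ⟨fun h => ⟨x.left, by ext <;> simp_all⟩, ?_⟩
  rintro ⟨a, rfl⟩
  simp

lemma right_smul_eq_ad_of_mem_center {D : LieDerivation R L L} {x : L ⋊⁅D.toSpanSingleton⁆ R}
    (hx : x ∈ center R _) : x.right • D = LieDerivation.ad R L (-x.left) := by
  ext b
  have h := congrArg left ((LieModule.mem_maxTrivSubmodule _ _ _ _).mp hx ⟨b, 0⟩)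
  simp only [lie_eq_mk, map_zero, LieDerivation.zero_apply, add_zero, zero_eq_mk,
    sub_eq_zero] at h
  simp [h]

end LieAlgebra.SemiDirectSum

end CommRing

section Field

variable {K L L' : Type*} [Field K] [LieRing L] [LieAlgebra K L] [LieRing L'] [LieAlgebra K L']

lemma LieAlgebra.finrank_center_prod [Module.Finite K L] [Module.Finite K L'] :
    finrank K (center K (L × L')) = finrank K (center K L) + finrank K (center K L') := by
  rw [centerProdEquiv.finrank_eq, finrank_prod]

lemma LieAlgebra.finrank_center_of_isLieAbelian [IsLieAbelian L] :
    finrank K (center K L) = finrank K L := by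
  rw [(isLieAbelian_iff_center_eq_top K L).mp inferInstance]
  exact finrank_top K L

lemma LieDerivation.exists_eq_ad_of_semiDirectSum_equiv_prod (hZ : center K L = ⊥)
    {D : LieDerivation K L L} (e : (L ⋊⁅D.toSpanSingleton⁆ K) ≃ₗ⁅K⁆ L × K) :
    ∃ a, D = ad K L a := by
  set x := e.symm (0, 1)
  have hx : x ∈ center K _ := e.symm.apply_mem_center_iff.2 <| mem_center_prod_iff.2
    ⟨zero_mem _, by simp [(isLieAbelian_iff_center_eq_top K K).1 inferInstance]⟩
  have hxD := SemiDirectSum.right_smul_eq_ad_of_mem_center hx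
  have ht : x.right ≠ 0 := by
    intro ht
    have hleft : -x.left = 0 := by
      rw [← map_eq_zero_iff _ (injective_ad_of_center_eq_bot hZ), ← hxD, ht, zero_smul]
    have hx0 : x = 0 := by
      ext
      · exact neg_eq_zero.mp hleft
      · exact ht
    simpa using congrArg Prod.snd (e.symm.injective (hx0.trans (map_zero e.symm).symm))
  refine ⟨-(x.right⁻¹ • x.left), ?_⟩
  rw [← smul_neg, map_smul, ← hxD, smul_smul, inv_mul_cancel₀ ht, one_smul]

end Field

namespace LieAlgebra

section CommRing

variable {R A : Type*} [CommRing R] [LieRing A] [LieAlgebra R A]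

def centralShear (z : center R A) : LieDerivation R (A × R) (A × R) where
  __ := LinearMap.inl R A R ∘ₗ LinearMap.toSpanSingleton R A z ∘ₗ LinearMap.snd R A R
  leibniz' x y := by
    have hz := (LieModule.mem_maxTrivSubmodule R A A _).mp z.2
    ext <;> simp [trivial_lie_zero, hz]

@[simp] lemma centralShear_apply (z : center R A) (x : A × R) :
    centralShear z x = (x.2 • (z : A), 0) := rfl

/-- `A ⊕ R ⊕ R` with `⁅(0, 0, 1), (0, 1, 0)⁆ = (z, 0, 0)`. -/
abbrev HeisenbergExtension (z : center R A) :=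
  (A × R) ⋊⁅(centralShear z).toSpanSingleton⁆ R

namespace HeisenbergExtension

variable (z : center R A)

def incl : A →ₗ⁅R⁆ HeisenbergExtension z :=
  (SemiDirectSum.inl _).comp (LieHom.inl R A R)

@[simp] lemma incl_apply (a : A) : incl z a = ⟨(a, 0), 0⟩ := rfl

def proj : HeisenbergExtension z →ₗ⁅R⁆ R × R where
  toFun x := (x.left.2, x.right)
  map_add' _ _ := rfl
  map_smul' _ _ := rfl
  map_lie' {x y} := by simp [trivial_lie_zero]

@[simp] lemma proj_apply (x : HeisenbergExtension z) : proj z x = (x.left.2, x.right) := rfl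

lemma incl_injective : Function.Injective (incl z) := fun a b h => by
  simpa using congrArg (·.left.1) h

lemma proj_surjective : Function.Surjective (proj z) := fun v => ⟨⟨(0, v.1), v.2⟩, rfl⟩

lemma proj_eq_zero_iff (x : HeisenbergExtension z) :
    proj z x = 0 ↔ x ∈ Set.range (incl z) := by
  refine ⟨fun h => ⟨x.left.1, ?_⟩, ?_⟩
  · simp only [proj_apply, Prod.mk_eq_zero] at h
    ext <;> simp [h]
  · rintro ⟨a, rfl⟩
    simp

end HeisenbergExtension

end CommRing

namespace HeisenbergExtension

variable {K A : Type*} [Field K] [LieRing A] [LieAlgebra K A] {z : center K A}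

lemma exists_mem_center_incl_eq (hz : (z : A) ≠ 0) {x : HeisenbergExtension z}
    (hx : x ∈ center K (HeisenbergExtension z)) : ∃ a ∈ center K A, incl z a = x := by
  have key y := congrArg (·.left.1) ((LieModule.mem_maxTrivSubmodule _ _ _ _).mp hx y)
  have hleft : x.left.1 ∈ center K A := fun b => by simpa using key ⟨(b, 0), 0⟩
  have hright : x.right = 0 := by simpa [hz] using key ⟨(0, 1), 0⟩
  have hsnd : x.left.2 = 0 := by simpa [hz] using key ⟨0, 1⟩
  exact ⟨x.left.1, hleft, by ext <;> simp [hright, hsnd]⟩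

lemma finrank_center_le [Module.Finite K A] (hz : (z : A) ≠ 0) :
    finrank K (center K (HeisenbergExtension z)) ≤ finrank K (center K A) :=
  calc finrank K (center K (HeisenbergExtension z))
      ≤ finrank K ((center K A).toSubmodule.map (incl z : A →ₗ[K] HeisenbergExtension z)) :=
        Submodule.finrank_mono fun _ hx => exists_mem_center_incl_eq hz hx
    _ ≤ finrank K (center K A) := Submodule.finrank_map_le _ _

lemma isEmpty_equiv_prod [Module.Finite K A] (hz : (z : A) ≠ 0) :
    IsEmpty (HeisenbergExtension z ≃ₗ⁅K⁆ A × K × K) := by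
  refine ⟨fun e => ?_⟩
  have h := e.finrank_center_eq
  rw [finrank_center_prod, finrank_center_of_isLieAbelian (L := K × K), finrank_prod,
    finrank_self] at h
  have := finrank_center_le hz
  omega

end HeisenbergExtension

end LieAlgebra

theorem complete_of_solvable_of_all_cocentral_split_general
    (K : Type u) [Field K]
    (A : Type u) [LieRing A] [LieAlgebra K A] [Module.Finite K A]
    (hsplit : ∀ (B V : Type u)
      [LieRing B] [LieAlgebra K B] [Module.Finite K B]
      [LieRing V] [LieAlgebra K V] [Module.Finite K V] [IsLieAbelian V]
      (ι : A →ₗ⁅K⁆ B) (π : B →ₗ⁅K⁆ V),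
      Function.Injective ι → Function.Surjective π →
      (∀ b : B, π b = 0 ↔ b ∈ Set.range ι) →
      Nonempty (B ≃ₗ⁅K⁆ A × V)) :
    LieAlgebra.center K A = ⊥ ∧
      ∀ D : LieDerivation K A A, ∃ a : A, D = LieDerivation.ad K A a := by
  have hZ : center K A = ⊥ := by
    refine (LieSubmodule.eq_bot_iff _).2 fun z hz => by_contra fun hz0 => ?_
    let z' : center K A := ⟨z, hz⟩
    obtain ⟨e⟩ := hsplit _ (K × K) _ _ (HeisenbergExtension.incl_injective z')
      (HeisenbergExtension.proj_surjective z') (HeisenbergExtension.proj_eq_zero_iff z')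
    exact (HeisenbergExtension.isEmpty_equiv_prod (z := z') hz0).false e
  refine ⟨hZ, fun D => ?_⟩
  obtain ⟨e⟩ := hsplit _ K _ _ (SemiDirectSum.inl_injective _) (SemiDirectSum.projr_surjective _)
    (SemiDirectSum.projr_eq_zero_iff D.toSpanSingleton)
  exact D.exists_eq_ad_of_semiDirectSum_equiv_prod hZ e

/-- a finite-dimensional solvable Lie algebra A (char 0) such that every
short exact sequence 0 → A → B → V → 0 with V abelian splits trivially (B ≅ A ⊕ V)
is complete: Z(A) = 0 and every derivation of A is inner. -/
theorem complete_of_solvable_of_all_cocentral_split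
    (K : Type u) [Field K] [CharZero K]
    (A : Type u) [LieRing A] [LieAlgebra K A] [Module.Finite K A]
    [LieAlgebra.IsSolvable A]
    (hsplit : ∀ (B V : Type u)
      [LieRing B] [LieAlgebra K B] [Module.Finite K B]
      [LieRing V] [LieAlgebra K V] [Module.Finite K V] [IsLieAbelian V]
      (ι : A →ₗ⁅K⁆ B) (π : B →ₗ⁅K⁆ V),
      Function.Injective ι → Function.Surjective π →
      (∀ b : B, π b = 0 ↔ b ∈ Set.range ι) →
      Nonempty (B ≃ₗ⁅K⁆ A × V)) :
    LieAlgebra.center K A = ⊥ ∧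
      ∀ D : LieDerivation K A A, ∃ a : A, D = LieDerivation.ad K A a :=
  complete_of_solvable_of_all_cocentral_split_general K A hsplit
end

section
/- If the Lie algebra direct sum C₁ ⊕ C₂ is cocomplete, then both C₁ and C₂ are cocomplete. -/
/-- A Lie algebra `C` is *cocomplete* if every central extension
`0 → V → B → C → 0` by a (finite-dimensional) abelian Lie algebra `V`
splits trivially, i.e. `B ≅ V ⊕ C` as Lie algebras. -/
def IsCocomplete (K : Type u) [Field K] (C : Type u) [LieRing C] [LieAlgebra K C] : Prop :=
  ∀ (V B : Type u)
    [LieRing V] [LieAlgebra K V] [Module.Finite K V] [IsLieAbelian V]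
    [LieRing B] [LieAlgebra K B] [Module.Finite K B]
    (ι : V →ₗ⁅K⁆ B) (π : B →ₗ⁅K⁆ C),
    Function.Injective ι → Function.Surjective π →
    (∀ b : B, π b = 0 ↔ b ∈ Set.range ι) →
    (∀ (v : V) (b : B), ⁅ι v, b⁆ = 0) →
    Nonempty (B ≃ₗ⁅K⁆ V × C)

/-!
Given a central extension `V → B → C₁`, the map `B × C₂ → C₁ × C₂` is a central extension by `V`,
so cocompleteness of `C₁ × C₂` gives `B × C₂ ≃ (V × C₁) × C₂`, and it remains to cancel `C₂`.

Cancellation for finite-dimensional Lie algebras is a Fitting-lemma argument. Write an isomorphism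
`e : M × Z ≃ X × Z` as a block matrix of Lie homomorphisms. Then `D = e₂₂ ∘ (e⁻¹)₂₂` lies in the
centroid of `Z`, and `e₂₁ ∘ (e⁻¹)₁₂ + D = 1`. If `D` is injective, `e₁₁ : M → X` is an isomorphism.
If `D` is nilpotent, `e₂₁ ∘ (e⁻¹)₁₂` is invertible, so `M ≃ ker e₂₁ × Z`, and `e` embeds
`ker e₂₁ × Z` into `X`. Otherwise the Fitting decomposition of `D` splits `Z` into two Lie algebras
of smaller dimension, and we induct on `dim Z`.
-/

open Module

section Prod
variable {K L₁ L₂ L₃ L₄ : Type*} [CommRing K] [LieRing L₁] [LieAlgebra K L₁] [LieRing L₂]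
  [LieAlgebra K L₂] [LieRing L₃] [LieAlgebra K L₃] [LieRing L₄] [LieAlgebra K L₄]

def LieEquiv.prodCongr (e₁ : L₁ ≃ₗ⁅K⁆ L₃) (e₂ : L₂ ≃ₗ⁅K⁆ L₄) : (L₁ × L₂) ≃ₗ⁅K⁆ (L₃ × L₄) where
  __ := e₁.toLinearEquiv.prodCongr e₂.toLinearEquiv
  map_lie' {x y} := Prod.ext (e₁.map_lie x.1 y.1) (e₂.map_lie x.2 y.2)

variable (K L₁ L₂ L₃) in
def LieEquiv.prodAssoc : ((L₁ × L₂) × L₃) ≃ₗ⁅K⁆ (L₁ × (L₂ × L₃)) where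
  __ := LinearEquiv.prodAssoc K L₁ L₂ L₃
  map_lie' := rfl

namespace LieHom

variable (f : (L₁ × L₂) →ₗ⁅K⁆ (L₃ × L₄))

def block₁₁ : L₁ →ₗ⁅K⁆ L₃ := (fst K L₃ L₄).comp (f.comp (inl K L₁ L₂))
def block₁₂ : L₂ →ₗ⁅K⁆ L₃ := (fst K L₃ L₄).comp (f.comp (inr K L₁ L₂))
def block₂₁ : L₁ →ₗ⁅K⁆ L₄ := (snd K L₃ L₄).comp (f.comp (inl K L₁ L₂))
def block₂₂ : L₂ →ₗ⁅K⁆ L₄ := (snd K L₃ L₄).comp (f.comp (inr K L₁ L₂))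

@[simp] lemma block₂₂_apply (y : L₂) : f.block₂₂ y = (f (0, y)).2 := rfl

lemma apply_eq_block (p : L₁ × L₂) :
    f p = (f.block₁₁ p.1 + f.block₁₂ p.2, f.block₂₁ p.1 + f.block₂₂ p.2) := by
  have : f p = f (p.1, 0) + f (0, p.2) := by rw [← map_add]; simp
  rw [this]
  rfl

lemma lie_block₂₁_block₂₂ (x : L₁) (y : L₂) : ⁅f.block₂₁ x, f.block₂₂ y⁆ = 0 := by
  have : ⁅f (x, 0), f (0, y)⁆ = 0 := by rw [← map_lie]; simp [Prod.mk_zero_zero]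
  exact congrArg Prod.snd this

end LieHom

end Prod

theorem LinearMap.isCompl_ker_range_of_bijective_comp {R E F : Type*} [Ring R] [AddCommGroup E]
    [Module R E] [AddCommGroup F] [Module R F] {f : E →ₗ[R] F} {g : F →ₗ[R] E}
    (h : Function.Bijective (f ∘ₗ g)) : IsCompl (ker f) (range g) := by
  refine ⟨?_, ?_⟩
  · rw [Submodule.disjoint_def]
    rintro _ hx ⟨y, rfl⟩
    rw [h.1 (by simpa using hx : f (g y) = f (g 0))]
    simp
  · rw [codisjoint_iff, eq_top_iff]
    intro x _
    obtain ⟨y, hy⟩ := h.2 (f x)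
    have hx : x - g y ∈ ker f := by simp_all
    simpa using Submodule.add_mem_sup hx (mem_range_self g y)

section FiniteDimensional
variable {K L L₁ L₂ : Type*} [Field K] [LieRing L] [LieAlgebra K L] [LieRing L₁] [LieAlgebra K L₁]
  [LieRing L₂] [LieAlgebra K L₂]

theorem LieHom.nonempty_lieEquiv_of_injective [FiniteDimensional K L₁] [FiniteDimensional K L₂]
    (f : L₁ →ₗ⁅K⁆ L₂) (hf : Function.Injective f) (h : finrank K L₁ = finrank K L₂) :
    Nonempty (L₁ ≃ₗ⁅K⁆ L₂) :=
  ⟨.ofBijective f ⟨hf, (LinearMap.injective_iff_surjective_of_finrank_eq_finrank h).mp hf⟩⟩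

end FiniteDimensional

namespace LieSubalgebra
variable {K L : Type*} [CommRing K] [LieRing L] [LieAlgebra K L]

noncomputable def prodEquivOfIsCompl (I J : LieSubalgebra K L)
    (h : IsCompl I.toSubmodule J.toSubmodule) (hIJ : ∀ x ∈ I, ∀ y ∈ J, ⁅x, y⁆ = 0) :
    (I × J) ≃ₗ⁅K⁆ L where
  __ := Submodule.prodEquivOfIsCompl _ _ h
  map_lie' {p q} := by
    show ((⁅p.1, q.1⁆ : I) : L) + (⁅p.2, q.2⁆ : J) = ⁅(p.1 : L) + p.2, (q.1 : L) + q.2⁆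
    rw [coe_bracket, coe_bracket, add_lie, lie_add, lie_add, hIJ _ p.1.2 _ q.2.2,
      ← lie_skew (p.2 : L) (q.1 : L), hIJ _ q.1.2 _ p.2.2, neg_zero, add_zero, zero_add]

end LieSubalgebra

namespace Module.End
variable {K L : Type*} [CommRing K] [LieRing L] [LieAlgebra K L]

def IsCentroidal (f : Module.End K L) : Prop := ∀ x y : L, ⁅f x, y⁆ = f ⁅x, y⁆

variable {f : Module.End K L}

lemma IsCentroidal.lie_apply (hf : f.IsCentroidal) (x y : L) : ⁅x, f y⁆ = f ⁅x, y⁆ := by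
  rw [← lie_skew, hf, ← map_neg, lie_skew]

lemma IsCentroidal.pow (hf : f.IsCentroidal) (n : ℕ) : (f ^ n).IsCentroidal := by
  induction n with
  | zero => intro x y; rfl
  | succ n ih => intro x y; rw [pow_succ', mul_apply, mul_apply, hf, ih]

lemma IsCentroidal.lie_eq_zero_of_mem_ker_of_mem_range (hf : f.IsCentroidal) {x y : L}
    (hx : x ∈ LinearMap.ker f) (hy : y ∈ LinearMap.range f) : ⁅x, y⁆ = 0 := by
  obtain ⟨z, rfl⟩ := hy
  rw [hf.lie_apply, ← hf, LinearMap.mem_ker.mp hx, zero_lie]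

def kerLieSubalgebra (f : Module.End K L) (hf : f.IsCentroidal) : LieSubalgebra K L where
  __ := LinearMap.ker f
  lie_mem' {x y} hx _ := show f ⁅x, y⁆ = 0 by rw [← hf, show f x = 0 from hx, zero_lie]

def rangeLieSubalgebra (f : Module.End K L) (hf : f.IsCentroidal) : LieSubalgebra K L where
  __ := LinearMap.range f
  lie_mem' {x y} hx _ := by
    obtain ⟨z, rfl⟩ := hx
    exact ⟨⁅z, y⁆, (hf z y).symm⟩

end Module.End

section Fitting
variable {K L : Type*} [Field K] [LieRing L] [LieAlgebra K L] [FiniteDimensional K L]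
  {f : Module.End K L}

theorem Module.End.IsCentroidal.exists_lieEquiv_prod (hf : f.IsCentroidal)
    (hinj : ¬Function.Injective f) (hnil : ¬IsNilpotent f) :
    ∃ L₀ L₁ : LieSubalgebra K L, finrank K L₀ < finrank K L ∧ finrank K L₁ < finrank K L ∧
      Nonempty ((L₀ × L₁) ≃ₗ⁅K⁆ L) := by
  obtain ⟨n, hcompl, hn⟩ :=
    (f.eventually_isCompl_ker_pow_range_pow.and (Filter.eventually_ge_atTop 1)).exists
  have hg := hf.pow n
  have hsum := Submodule.finrank_add_eq_of_isCompl hcompl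
  have hker : LinearMap.ker (f ^ n) ≠ ⊥ := by
    rw [Ne, LinearMap.ker_eq_bot]
    obtain ⟨m, rfl⟩ := Nat.exists_eq_add_of_le' hn
    intro h
    rw [pow_succ, Module.End.coe_mul] at h
    exact hinj h.of_comp
  have hrange : LinearMap.range (f ^ n) ≠ ⊥ := by
    rw [Ne, LinearMap.range_eq_bot]
    exact fun h => hnil ⟨n, h⟩
  rw [Ne, ← Submodule.finrank_eq_zero] at hker hrange
  have h₀ : finrank K ((f ^ n).kerLieSubalgebra hg) = finrank K (LinearMap.ker (f ^ n)) := rfl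
  have h₁ : finrank K ((f ^ n).rangeLieSubalgebra hg) = finrank K (LinearMap.range (f ^ n)) := rfl
  refine ⟨(f ^ n).kerLieSubalgebra hg, (f ^ n).rangeLieSubalgebra hg, by omega, by omega,
    ⟨LieSubalgebra.prodEquivOfIsCompl _ _ hcompl fun x hx y hy => ?_⟩⟩
  exact hg.lie_eq_zero_of_mem_ker_of_mem_range hx hy

end Fitting

namespace LieEquiv

section Blocks
variable {K L₁ L₂ L₃ L₄ : Type*} [CommRing K] [LieRing L₁] [LieAlgebra K L₁] [LieRing L₂]
  [LieAlgebra K L₂] [LieRing L₃] [LieAlgebra K L₃] [LieRing L₄] [LieAlgebra K L₄]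
  (e : (L₁ × L₂) ≃ₗ⁅K⁆ (L₃ × L₄))

lemma block₂₁_symm_block₁₂_add_block₂₂_symm_block₂₂ (z : L₄) :
    e.block₂₁ (e.symm.block₁₂ z) + e.block₂₂ (e.symm.block₂₂ z) = z := by
  have := e.toLieHom.apply_eq_block (e.symm (0, z))
  rw [LieEquiv.coe_toLieHom, e.apply_symm_apply] at this
  exact (congrArg Prod.snd this).symm

lemma isCentroidal_block₂₂_comp_symm_block₂₂ :
    Module.End.IsCentroidal (e.block₂₂.comp e.symm.block₂₂ : L₄ →ₗ[K] L₄) := by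
  intro s t
  have hcomm : ⁅e.block₂₂ (e.symm.block₂₂ s), e.block₂₁ (e.symm.block₁₂ t)⁆ = 0 := by
    rw [← lie_skew, LieHom.lie_block₂₁_block₂₂, neg_zero]
  conv_lhs => rw [← block₂₁_symm_block₁₂_add_block₂₂_symm_block₂₂ e t]
  simp only [LieHom.coe_toLinearMap, LieHom.coe_comp, Function.comp_apply]
  rw [lie_add, hcomm, zero_add, ← LieHom.map_lie, ← LieHom.map_lie]

lemma injective_block₁₁ (hD : Function.Injective (e.block₂₂.comp e.symm.block₂₂)) :
    Function.Injective e.block₁₁ := by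
  refine (injective_iff_map_eq_zero _).mpr fun w hw => ?_
  have he : e (w, 0) = (0, e.block₂₁ w) := Prod.ext hw rfl
  have hsymm : e.symm (0, e.block₂₁ w) = (w, 0) := by rw [← he, symm_apply_apply]
  have hc : e.block₂₁ w = 0 := hD <| by
    rw [LieHom.comp_apply, LieHom.block₂₂_apply e.symm.toLieHom, coe_toLieHom, hsymm]
    simp [Prod.mk_zero_zero]
  rw [hc, Prod.mk_zero_zero, map_zero] at hsymm
  exact (congrArg Prod.fst hsymm).symm

lemma lie_symm_block₁₂_eq_zero {w : L₁} (hw : w ∈ e.block₂₁.ker) (z : L₄) :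
    ⁅w, e.symm.block₁₂ z⁆ = 0 := by
  have he : e (w, 0) = (e.block₁₁ w, 0) := Prod.ext rfl hw
  have : ⁅(w, (0 : L₂)), e.symm (0, z)⁆ = 0 := by
    refine (map_eq_zero_iff e e.injective).mp ?_
    rw [e.map_lie, apply_symm_apply, he]
    simp [Prod.mk_zero_zero]
  exact congrArg Prod.fst this

lemma injective_fst_comp_prodMap_ker_incl
    (h : Function.Injective (e.block₂₁.comp e.symm.block₁₂)) :
    Function.Injective ((LieHom.fst K L₃ L₄).comp <|
      e.toLieHom.comp (e.block₂₁.ker.toLieSubalgebra.incl.prodMap (LieHom.id : L₂ →ₗ⁅K⁆ L₂))) := by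
  refine (injective_iff_map_eq_zero _).mpr fun ⟨w, t⟩ hwt => ?_
  have hw : e.block₂₁ w = 0 := LieHom.mem_ker.mp w.2
  have he : e (w, t) = (0, e.block₂₂ t) := by
    refine Prod.ext hwt ?_
    rw [← coe_toLieHom, e.toLieHom.apply_eq_block]
    simp [hw]
  have hsymm : e.symm (0, e.block₂₂ t) = ((w : L₁), t) := by rw [← he, symm_apply_apply]
  have hd : e.block₂₂ t = 0 := h <| by
    have := block₂₁_symm_block₁₂_add_block₂₂_symm_block₂₂ e (e.block₂₂ t)
    rw [LieHom.block₂₂_apply e.symm.toLieHom, coe_toLieHom, hsymm, add_eq_right] at this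
    simpa [Prod.mk_zero_zero] using this
  rw [hd, Prod.mk_zero_zero, map_zero, eq_comm, Prod.mk_eq_zero] at hsymm
  exact Prod.ext (Subtype.ext hsymm.1) hsymm.2

end Blocks

section Cancel
variable {K : Type*} [Field K] {M X Z : Type u} [LieRing M] [LieAlgebra K M] [LieRing X]
  [LieAlgebra K X] [LieRing Z] [LieAlgebra K Z]
  [FiniteDimensional K M] [FiniteDimensional K X] [FiniteDimensional K Z]

lemma finrank_eq_of_prod (e : (M × Z) ≃ₗ⁅K⁆ (X × Z)) : finrank K M = finrank K X := by
  have := e.toLinearEquiv.finrank_eq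
  rw [finrank_prod, finrank_prod] at this
  omega

theorem nonempty_of_injective_block₂₂_comp (e : (M × Z) ≃ₗ⁅K⁆ (X × Z))
    (hD : Function.Injective (e.block₂₂.comp e.symm.block₂₂)) : Nonempty (M ≃ₗ⁅K⁆ X) :=
  e.block₁₁.nonempty_lieEquiv_of_injective (e.injective_block₁₁ hD) e.finrank_eq_of_prod

theorem nonempty_of_bijective_block₂₁_comp (e : (M × Z) ≃ₗ⁅K⁆ (X × Z))
    (h : Function.Bijective (e.block₂₁.comp e.symm.block₁₂)) : Nonempty (M ≃ₗ⁅K⁆ X) := by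
  have hcompl : IsCompl e.block₂₁.ker.toLieSubalgebra.toSubmodule
      e.symm.block₁₂.range.toSubmodule :=
    LinearMap.isCompl_ker_range_of_bijective_comp h
  let φ : M ≃ₗ⁅K⁆ (e.block₂₁.ker.toLieSubalgebra × Z) :=
    (LieSubalgebra.prodEquivOfIsCompl _ _ hcompl fun _ hx _ ⟨z, hz⟩ =>
        hz ▸ e.lie_symm_block₁₂_eq_zero hx z).symm.trans
      (prodCongr refl (e.symm.block₁₂.equivRangeOfInjective (h.1.of_comp (f := e.block₂₁))).symm)
  obtain ⟨ψ⟩ := LieHom.nonempty_lieEquiv_of_injective _ (e.injective_fst_comp_prodMap_ker_incl h.1)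
    (φ.toLinearEquiv.finrank_eq.symm.trans e.finrank_eq_of_prod)
  exact ⟨φ.trans ψ⟩

theorem nonempty_of_prod_cancel_right (e : (M × Z) ≃ₗ⁅K⁆ (X × Z)) : Nonempty (M ≃ₗ⁅K⁆ X) := by
  obtain ⟨n, hn⟩ : ∃ n, finrank K Z = n := ⟨_, rfl⟩
  induction n using Nat.strong_induction_on generalizing M X Z with
  | _ n ih =>
  set D := e.block₂₂.comp e.symm.block₂₂
  by_cases hinj : Function.Injective D
  · exact e.nonempty_of_injective_block₂₂_comp hinj
  by_cases hnil : IsNilpotent (D : Module.End K Z)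
  · refine e.nonempty_of_bijective_block₂₁_comp ?_
    have hsub : (e.block₂₁.comp e.symm.block₁₂ : Module.End K Z) = 1 - D := by
      ext z
      simp only [LieHom.coe_toLinearMap, LinearMap.sub_apply, Module.End.one_apply,
        eq_sub_iff_add_eq]
      exact e.block₂₁_symm_block₁₂_add_block₂₂_symm_block₂₂ z
    exact (Module.End.isUnit_iff _).mp (hsub ▸ hnil.isUnit_one_sub)
  obtain ⟨Z₀, Z₁, h₀, h₁, ⟨φ⟩⟩ :=
    e.isCentroidal_block₂₂_comp_symm_block₂₂.exists_lieEquiv_prod hinj hnil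
  let e₁ : ((M × Z₀) × Z₁) ≃ₗ⁅K⁆ ((X × Z₀) × Z₁) :=
    (prodAssoc K M Z₀ Z₁).trans <| (prodCongr refl φ).trans <|
      e.trans <| (prodCongr refl φ.symm).trans (prodAssoc K X Z₀ Z₁).symm
  obtain ⟨e₀⟩ := ih _ (hn ▸ h₁) e₁ rfl
  exact ih _ (hn ▸ h₀) e₀ rfl

end Cancel
end LieEquiv

namespace IsCocomplete
variable {K : Type u} [Field K]

theorem of_lieEquiv {C C' : Type u} [LieRing C] [LieAlgebra K C] [LieRing C'] [LieAlgebra K C']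
    (φ : C ≃ₗ⁅K⁆ C') (h : IsCocomplete K C) : IsCocomplete K C' := by
  intro V B _ _ _ _ _ _ _ ι π hι hπ hexact hcentral
  obtain ⟨e⟩ := h V B ι (φ.symm.toLieHom.comp π) hι (φ.symm.surjective.comp hπ)
    (fun b => by simp [← hexact b]) hcentral
  exact ⟨e.trans (LieEquiv.prodCongr LieEquiv.refl φ)⟩

theorem of_prod_left {C₁ C₂ : Type u} [LieRing C₁] [LieAlgebra K C₁] [FiniteDimensional K C₁]
    [LieRing C₂] [LieAlgebra K C₂] [FiniteDimensional K C₂] (h : IsCocomplete K (C₁ × C₂)) :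
    IsCocomplete K C₁ := by
  intro V B _ _ _ _ _ _ _ ι π hι hπ hexact hcentral
  obtain ⟨e⟩ := h V (B × C₂) ((LieHom.inl K B C₂).comp ι) (π.prodMap LieHom.id)
    (LieHom.inl_injective.comp hι) (hπ.prodMap Function.surjective_id)
    (fun ⟨b, c⟩ => by simp [Prod.ext_iff, hexact, eq_comm (a := (0 : C₂))])
    (fun v ⟨b, c⟩ => by simp [hcentral])
  exact LieEquiv.nonempty_of_prod_cancel_right (e.trans (LieEquiv.prodAssoc K V C₁ C₂).symm)

end IsCocomplete

theorem cocomplete_summands_of_cocomplete_prod_general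
    (K : Type u) [Field K]
    (C₁ C₂ : Type u)
    [LieRing C₁] [LieAlgebra K C₁] [Module.Finite K C₁]
    [LieRing C₂] [LieAlgebra K C₂] [Module.Finite K C₂]
    (h : IsCocomplete K (C₁ × C₂)) :
    IsCocomplete K C₁ ∧ IsCocomplete K C₂ :=
  ⟨h.of_prod_left, (h.of_lieEquiv (LieEquiv.prodComm K C₁ C₂)).of_prod_left⟩

/-- if the direct sum C₁ ⊕ C₂ is cocomplete then both C₁ and C₂ are
cocomplete. -/
theorem cocomplete_summands_of_cocomplete_prod
    (K : Type u) [Field K] [CharZero K]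
    (C₁ C₂ : Type u)
    [LieRing C₁] [LieAlgebra K C₁] [Module.Finite K C₁]
    [LieRing C₂] [LieAlgebra K C₂] [Module.Finite K C₂]
    (h : IsCocomplete K (C₁ × C₂)) :
    IsCocomplete K C₁ ∧ IsCocomplete K C₂ :=
  cocomplete_summands_of_cocomplete_prod_general K C₁ C₂ h
end

section
/- If the direct sum C₁ ⊕ C₂ of two finite-dimensional Lie algebras satisfies H²(C₁ ⊕ C₂, K) = 0, then H²(C₁, K) = 0, H²(C₂, K) = 0, and moreover C₁ = [C₁, C₁] or C₂ = [C₂, C₂] (at least one summand is perfect). -/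
section LieH2
variable (K : Type*) [Field K] (L : Type*) [LieRing L] [LieAlgebra K L]

/-- The space of 2-cocycles on `L` with trivial coefficients `K`: alternating bilinear
forms `f` satisfying the cocycle identity
`f(⁅x,y⁆, z) + f(⁅y,z⁆, x) + f(⁅z,x⁆, y) = 0`. -/
def lieZ2 : Submodule K (L →ₗ[K] L →ₗ[K] K) where
  carrier := {f | (∀ x : L, f x x = 0) ∧
    ∀ x y z : L, f ⁅x, y⁆ z + f ⁅y, z⁆ x + f ⁅z, x⁆ y = 0}
  add_mem' := by
    intro f g hf hg
    refine ⟨fun x => by simp [hf.1 x, hg.1 x], fun x y z => ?_⟩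
    have h1 := hf.2 x y z
    have h2 := hg.2 x y z
    simp only [LinearMap.add_apply]
    linear_combination h1 + h2
  zero_mem' := by exact ⟨fun x => rfl, fun x y z => by simp⟩
  smul_mem' := by
    intro t f hf
    refine ⟨fun x => by simp [hf.1 x], fun x y z => ?_⟩
    have h1 := hf.2 x y z
    simp only [LinearMap.smul_apply, smul_eq_mul]
    linear_combination t * h1

/-- The coboundary map sending a linear form `g` on `L` to the 2-coboundary
`(x, y) ↦ g ⁅x, y⁆`. -/
def lieD1 : (L →ₗ[K] K) →ₗ[K] (L →ₗ[K] L →ₗ[K] K) where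
  toFun g := LinearMap.mk₂ K (fun x y => g ⁅x, y⁆)
    (fun x x' y => by simp [add_lie])
    (fun t x y => by simp [smul_lie])
    (fun x y y' => by simp [lie_add])
    (fun t x y => by simp [lie_smul])
  map_add' g g' := by ext x y; simp
  map_smul' t g := by ext x y; simp

/-- The second Chevalley–Eilenberg cohomology of `L` with trivial coefficients `K`:
the image of the 2-cocycles in the quotient of the bilinear forms by the
2-coboundaries (i.e. `Z²(L,K)/B²(L,K)`, since `B² ⊆ Z²`). -/
abbrev lieH2 : Type _ :=
  ↥(Submodule.map (R := K) (M := L →ₗ[K] L →ₗ[K] K) (LinearMap.range (lieD1 K L)).mkQ (lieZ2 K L))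

end LieH2

/-!
H² of a retract of `L` (in the category of Lie algebras) embeds into H² of `L`: pull a cocycle
back along the retraction, write it as a coboundary `g ⁅·,·⁆`, and push `g` forward along the
section. Both factors of `C₁ × C₂` are retracts. If neither factor were perfect, there would be
nonzero linear forms `φ₁`, `φ₂` killing the brackets of `C₁`, `C₂`; their cup product
`(x, y) ↦ φ₁ x.1 φ₂ y.2 - φ₁ y.1 φ₂ x.2` is a 2-cocycle on `C₁ × C₂`, but it does not vanish on
the commuting pair `(a, 0)`, `(0, b)` with `φ₁ a * φ₂ b ≠ 0`, while every coboundary does.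
-/

section LieH2

variable (K : Type*) [Field K] {L M : Type*} [LieRing L] [LieAlgebra K L] [LieRing M]
  [LieAlgebra K M]

@[simp] lemma lieD1_apply (g : L →ₗ[K] K) (x y : L) : lieD1 K L g x y = g ⁅x, y⁆ := rfl

lemma subsingleton_lieH2_iff :
    Subsingleton (lieH2 K L) ↔ lieZ2 K L ≤ LinearMap.range (lieD1 K L) := by
  rw [Submodule.subsingleton_iff_eq_bot, eq_bot_iff, Submodule.map_le_iff_le_comap,
    Submodule.comap_bot]
  simp only [SetLike.le_def, LinearMap.mem_ker, Submodule.mkQ_apply, Submodule.Quotient.mk_eq_zero]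

lemma compl₁₂_mem_lieZ2 (π : L →ₗ⁅K⁆ M) {f : M →ₗ[K] M →ₗ[K] K} (hf : f ∈ lieZ2 K M) :
    f.compl₁₂ (π : L →ₗ[K] M) π ∈ lieZ2 K L :=
  ⟨fun x => hf.1 (π x), fun x y z => by simpa using hf.2 (π x) (π y) (π z)⟩

lemma lieD1_comp (σ : M →ₗ⁅K⁆ L) (g : L →ₗ[K] K) :
    lieD1 K M (g ∘ₗ σ) = (lieD1 K L g).compl₁₂ (σ : M →ₗ[K] L) σ := by
  ext x y
  simp

lemma subsingleton_lieH2_of_leftInverse (π : L →ₗ⁅K⁆ M) (σ : M →ₗ⁅K⁆ L)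
    (hπσ : Function.LeftInverse π σ) (h : Subsingleton (lieH2 K L)) :
    Subsingleton (lieH2 K M) := by
  rw [subsingleton_lieH2_iff] at h ⊢
  intro f hf
  obtain ⟨g, hg⟩ := h (compl₁₂_mem_lieZ2 K π hf)
  refine ⟨g ∘ₗ σ, ?_⟩
  ext x y
  simp [lieD1_comp, hg, hπσ x, hπσ y]

lemma notMem_range_lieD1_of_lie_eq_zero {f : L →ₗ[K] L →ₗ[K] K} {x y : L}
    (hxy : ⁅x, y⁆ = 0) (hf : f x y ≠ 0) : f ∉ LinearMap.range (lieD1 K L) := by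
  rintro ⟨g, rfl⟩
  simp [hxy] at hf

lemma exists_ne_zero_forall_lie_eq_zero (hL : ⁅(⊤ : LieIdeal K L), (⊤ : LieIdeal K L)⁆ ≠ ⊤) :
    ∃ φ : L →ₗ[K] K, φ ≠ 0 ∧ ∀ x y : L, φ ⁅x, y⁆ = 0 := by
  set p : Submodule K L := ↑(⁅(⊤ : LieIdeal K L), (⊤ : LieIdeal K L)⁆ : LieIdeal K L)
  have hp : p < ⊤ :=
    lt_top_iff_ne_top.mpr fun hp => hL (LieSubmodule.toSubmodule_eq_top _ |>.mp hp)
  obtain ⟨φ, hφ, hφp⟩ := Submodule.exists_dual_map_eq_bot_of_lt_top hp inferInstance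
  refine ⟨φ, hφ, fun x y => ?_⟩
  have hxy : ⁅x, y⁆ ∈ p :=
    LieSubmodule.lie_mem_lie (LieSubmodule.mem_top x) (LieSubmodule.mem_top y)
  simpa [hφp] using Submodule.mem_map_of_mem (f := φ) hxy

def lieCup (φ ψ : L →ₗ[K] K) : L →ₗ[K] L →ₗ[K] K :=
  LinearMap.mk₂ K (fun x y => φ x * ψ y - φ y * ψ x)
    (fun x x' y => by simp only [map_add]; ring)
    (fun t x y => by simp only [map_smul, smul_eq_mul]; ring)
    (fun x y y' => by simp only [map_add]; ring)
    (fun t x y => by simp only [map_smul, smul_eq_mul]; ring)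

@[simp] lemma lieCup_apply (φ ψ : L →ₗ[K] K) (x y : L) :
    lieCup K φ ψ x y = φ x * ψ y - φ y * ψ x := rfl

lemma lieCup_mem_lieZ2 {φ ψ : L →ₗ[K] K} (hφ : ∀ x y : L, φ ⁅x, y⁆ = 0)
    (hψ : ∀ x y : L, ψ ⁅x, y⁆ = 0) : lieCup K φ ψ ∈ lieZ2 K L :=
  ⟨fun x => by simp, fun x y z => by simp [hφ, hψ]⟩

end LieH2

section Prod

variable (K : Type*) [Field K] {A C : Type*} [LieRing A] [LieAlgebra K A] [LieRing C]
  [LieAlgebra K C]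

lemma lie_top_eq_top_or_of_subsingleton_lieH2_prod (h : Subsingleton (lieH2 K (A × C))) :
    ⁅(⊤ : LieIdeal K A), (⊤ : LieIdeal K A)⁆ = ⊤ ∨
      ⁅(⊤ : LieIdeal K C), (⊤ : LieIdeal K C)⁆ = ⊤ := by
  by_contra! hAC
  obtain ⟨φ, hφ, hφA⟩ := exists_ne_zero_forall_lie_eq_zero K hAC.1
  obtain ⟨ψ, hψ, hψC⟩ := exists_ne_zero_forall_lie_eq_zero K hAC.2
  obtain ⟨a, ha⟩ := DFunLike.ne_iff.mp hφ
  obtain ⟨b, hb⟩ := DFunLike.ne_iff.mp hψ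
  have hcocycle :
      lieCup K (φ ∘ₗ LinearMap.fst K A C) (ψ ∘ₗ LinearMap.snd K A C) ∈ lieZ2 K (A × C) :=
    lieCup_mem_lieZ2 K (fun x y => hφA x.1 y.1) (fun x y => hψC x.2 y.2)
  refine notMem_range_lieD1_of_lie_eq_zero K (x := (a, 0)) (y := (0, b)) (by simp) ?_
    ((subsingleton_lieH2_iff K).mp h hcocycle)
  simpa using mul_ne_zero ha hb

end Prod

theorem H2_vanish_of_prod_H2_vanish_general
    (K : Type u) [Field K]
    (C₁ C₂ : Type u)
    [LieRing C₁] [LieAlgebra K C₁]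
    [LieRing C₂] [LieAlgebra K C₂]
    (h : Subsingleton (lieH2 K (C₁ × C₂))) :
    Subsingleton (lieH2 K C₁) ∧ Subsingleton (lieH2 K C₂) ∧
      (⁅(⊤ : LieIdeal K C₁), (⊤ : LieIdeal K C₁)⁆ = ⊤ ∨
        ⁅(⊤ : LieIdeal K C₂), (⊤ : LieIdeal K C₂)⁆ = ⊤) :=
  ⟨subsingleton_lieH2_of_leftInverse K (LieHom.fst K C₁ C₂) (LieHom.inl K C₁ C₂)
      (fun _ => rfl) h,
    subsingleton_lieH2_of_leftInverse K (LieHom.snd K C₁ C₂) (LieHom.inr K C₁ C₂)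
      (fun _ => rfl) h,
    lie_top_eq_top_or_of_subsingleton_lieH2_prod K h⟩

/-- if H²(C₁ ⊕ C₂, K) = 0 then H²(C₁, K) = 0, H²(C₂, K) = 0, and at
least one of C₁, C₂ is perfect (equals its own derived algebra). -/
theorem H2_vanish_of_prod_H2_vanish
    (K : Type u) [Field K] [CharZero K]
    (C₁ C₂ : Type u)
    [LieRing C₁] [LieAlgebra K C₁] [Module.Finite K C₁]
    [LieRing C₂] [LieAlgebra K C₂] [Module.Finite K C₂]
    (h : Subsingleton (lieH2 K (C₁ × C₂))) :
    Subsingleton (lieH2 K C₁) ∧ Subsingleton (lieH2 K C₂) ∧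
      (⁅(⊤ : LieIdeal K C₁), (⊤ : LieIdeal K C₁)⁆ = ⊤ ∨
        ⁅(⊤ : LieIdeal K C₂), (⊤ : LieIdeal K C₂)⁆ = ⊤) :=
  H2_vanish_of_prod_H2_vanish_general K C₁ C₂ h
end

section
/- Two almost abelian Lie algebras C = Kⁿ ⋊_D K·e₀ and C′ = Kⁿ ⋊_{D′} K·e₀′ are isomorphic if and only if there exist a nonzero scalar α ∈ K and an invertible linear map Φ ∈ GL_n(K) such that αD′ = Φ⁻¹DΦ. -/
/-- The almost abelian Lie algebra `Kⁿ ⋊_D K·e₀`: underlying space `Kⁿ × K`, with `Kⁿ`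
an abelian ideal and `⁅e₀, v⁆ = D v`; explicitly
`⁅(v, a), (w, b)⁆ = (a • D w - b • D v, 0)`. -/
def AlmostAbelian (K : Type*) [Field K] (n : ℕ)
    (D : (Fin n → K) →ₗ[K] (Fin n → K)) : Type _ := (Fin n → K) × K

namespace AlmostAbelian

variable (K : Type*) [Field K] (n : ℕ) (D : (Fin n → K) →ₗ[K] (Fin n → K))

instance : AddCommGroup (AlmostAbelian K n D) :=
  inferInstanceAs (AddCommGroup ((Fin n → K) × K))
instance : Module K (AlmostAbelian K n D) :=
  inferInstanceAs (Module K ((Fin n → K) × K))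
instance : Module.Finite K (AlmostAbelian K n D) :=
  inferInstanceAs (Module.Finite K ((Fin n → K) × K))

variable {K n D}

/-- The `Kⁿ`-component. -/
def v (x : AlmostAbelian K n D) : Fin n → K := (x : (Fin n → K) × K).1
/-- The `K·e₀`-component. -/
def t (x : AlmostAbelian K n D) : K := (x : (Fin n → K) × K).2
/-- Build an element from its two components. -/
def mk (w : Fin n → K) (a : K) : AlmostAbelian K n D := ((w, a) : (Fin n → K) × K)

@[simp] lemma v_mk (w : Fin n → K) (a : K) : v (mk w a : AlmostAbelian K n D) = w := rfl
@[simp] lemma t_mk (w : Fin n → K) (a : K) : t (mk w a : AlmostAbelian K n D) = a := rfl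
@[simp] lemma v_zero : v (0 : AlmostAbelian K n D) = 0 := rfl
@[simp] lemma t_zero : t (0 : AlmostAbelian K n D) = 0 := rfl
@[simp] lemma v_add (x y : AlmostAbelian K n D) : v (x + y) = v x + v y := rfl
@[simp] lemma t_add (x y : AlmostAbelian K n D) : t (x + y) = t x + t y := rfl
@[simp] lemma v_smul (c : K) (x : AlmostAbelian K n D) : v (c • x) = c • v x := rfl
@[simp] lemma t_smul (c : K) (x : AlmostAbelian K n D) : t (c • x) = c * t x := rfl

lemma ext' {x y : AlmostAbelian K n D} (h1 : v x = v y) (h2 : t x = t y) : x = y :=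
  Prod.ext h1 h2

variable (K n D)

instance : LieRing (AlmostAbelian K n D) where
  bracket x y := mk (t x • D (v y) - t y • D (v x)) 0
  add_lie x y z := by
    refine ext' ?_ ?_ <;> simp [map_add, add_smul, smul_add] <;> abel
  lie_add x y z := by
    refine ext' ?_ ?_ <;> simp [map_add, add_smul, smul_add] <;> abel
  lie_self x := by
    refine ext' ?_ ?_ <;> simp [v_zero, t_zero]
  leibniz_lie x y z := by
    refine ext' ?_ ?_ <;>
      simp [map_sub, map_smul, smul_sub, smul_smul, mul_comm] <;> abel

variable {K n D} in
@[simp] lemma v_lie (x y : AlmostAbelian K n D) :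
    v ⁅x, y⁆ = t x • D (v y) - t y • D (v x) := rfl
variable {K n D} in
@[simp] lemma t_lie (x y : AlmostAbelian K n D) : t ⁅x, y⁆ = 0 := rfl

instance : LieAlgebra K (AlmostAbelian K n D) where
  lie_smul c x y := by
    refine ext' ?_ ?_ <;> simp [map_smul, smul_sub, smul_smul, mul_comm]

end AlmostAbelian

/-!
Let `f` be an isomorphism and `τ` the `e₀'`-coordinate of `f` on the ideal `Kⁿ`. If `τ = 0`, then
`f` restricts to an automorphism `g` of `Kⁿ`, and `f ⁅e₀, w⁆ = ⁅f e₀, f w⁆` reads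
`g ∘ D = c • D' ∘ g`, where `c ≠ 0` is the `e₀'`-coefficient of `f e₀`. If `τ ≠ 0`, bracketing with
some `f w₀`, `τ w₀ ≠ 0`, shows that `f` maps `ker τ` into `ker D'`, so `f (D z) = ⁅f e₀, f z⁆ = 0`
there: `ker τ ≤ ker D`, i.e. `D = τ ⊗ s`, and `τ s = 0` because brackets have no `e₀'`-part.
Doing the same for `f⁻¹`, it remains to see that two nonzero rank-one square-zero maps `τ ⊗ s`,
`σ ⊗ p` are proportionally similar: an automorphism carrying `ker τ` onto `ker σ` and `s` to `p`
conjugates one to a multiple of the other.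
-/

open Module

theorem LinearEquiv.exists_apply_eq_of_finrank_eq {K V W : Type*} [Field K] [AddCommGroup V]
    [Module K V] [AddCommGroup W] [Module K W] [FiniteDimensional K V] [FiniteDimensional K W]
    (h : finrank K V = finrank K W) {v : V} {w : W} (hv : v ≠ 0) (hw : w ≠ 0) :
    ∃ e : V ≃ₗ[K] W, e v = w := by
  let e₀ := LinearEquiv.ofFinrankEq V W h
  have he₀ : e₀ v ≠ 0 := e₀.map_ne_zero_iff.mpr hv
  obtain ⟨g, hg⟩ := Submodule.exists_linearEquiv_restrict_eq
    ((coord K W _ he₀).trans (toSpanNonzeroSingleton K W w hw))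
  refine ⟨e₀.trans g, ?_⟩
  simpa [coord_self] using (hg ⟨e₀ v, Submodule.mem_span_singleton_self _⟩).symm

namespace LinearMap

variable {K V : Type*} [Field K] [AddCommGroup V] [Module K V]

theorem exists_eq_smulRight_of_ker_le {M : Type*} [AddCommGroup M] [Module K M]
    {τ : V →ₗ[K] K} {D : V →ₗ[K] M} (h : ker τ ≤ ker D) : ∃ s : M, D = τ.smulRight s := by
  by_cases hτ : τ = 0
  · subst hτ
    exact ⟨0, ext fun x => by simpa using h (show x ∈ ker (0 : V →ₗ[K] K) by simp)⟩
  obtain ⟨w, hw⟩ := τ.surjective hτ 1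
  refine ⟨D w, ext fun x => ?_⟩
  have hx : x - τ x • w ∈ ker τ := by simp [hw]
  simpa [sub_eq_zero] using h hx

def ProportionallySimilar (D D' : V →ₗ[K] V) : Prop :=
  ∃ α : K, α ≠ 0 ∧ ∃ Φ : V ≃ₗ[K] V, α • D' = Φ.symm.toLinearMap ∘ₗ D ∘ₗ Φ.toLinearMap

variable {D D' : V →ₗ[K] V}

theorem proportionallySimilar_iff :
    D.ProportionallySimilar D' ↔
      ∃ α : K, α ≠ 0 ∧ ∃ Ψ : V ≃ₗ[K] V, ∀ x, Ψ (D x) = α • D' (Ψ x) := by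
  refine ⟨fun ⟨α, hα, Φ, h⟩ => ⟨α, hα, Φ.symm, fun x => ?_⟩,
    fun ⟨α, hα, Ψ, h⟩ => ⟨α, hα, Ψ.symm, ext fun x => ?_⟩⟩
  · simpa using (congr($h (Φ.symm x))).symm
  · simpa using (h (Ψ.symm x)).symm

theorem ProportionallySimilar.symm (h : D.ProportionallySimilar D') :
    D'.ProportionallySimilar D := by
  obtain ⟨α, hα, Ψ, hΨ⟩ := proportionallySimilar_iff.mp h
  refine proportionallySimilar_iff.mpr ⟨α⁻¹, inv_ne_zero hα, Ψ.symm, fun x => ?_⟩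
  rw [Ψ.symm_apply_eq, map_smul, hΨ, Ψ.apply_symm_apply, inv_smul_smul₀ hα]

theorem proportionallySimilar_smulRight [FiniteDimensional K V] {τ σ : V →ₗ[K] K} {s p : V}
    (hτ : τ ≠ 0) (hσ : σ ≠ 0) (hs : s ≠ 0) (hp : p ≠ 0) (hτs : τ s = 0) (hσp : σ p = 0) :
    (τ.smulRight s).ProportionallySimilar (σ.smulRight p) := by
  have hrank : finrank K (ker τ) = finrank K (ker σ) := by
    have := Module.Dual.finrank_ker_add_one_of_ne_zero hτ
    have := Module.Dual.finrank_ker_add_one_of_ne_zero hσ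
    omega
  obtain ⟨M, hM⟩ := LinearEquiv.exists_apply_eq_of_finrank_eq hrank
    (v := (⟨s, hτs⟩ : ker τ)) (w := ⟨p, hσp⟩)
    (by simpa [Subtype.ext_iff] using hs) (by simpa [Subtype.ext_iff] using hp)
  obtain ⟨g, hg⟩ := Submodule.exists_linearEquiv_restrict_eq M
  have hgs : g s = p := by rw [← hg ⟨s, hτs⟩, hM]
  obtain ⟨c, hc⟩ : ∃ c : K, σ ∘ₗ g.toLinearMap = τ.smulRight c :=
    exists_eq_smulRight_of_ker_le fun x hx => by simp [← hg ⟨x, hx⟩]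
  have hc0 : c ≠ 0 := by
    rintro rfl
    refine hσ (ext fun y => ?_)
    simpa using congr($hc (g.symm y))
  refine proportionallySimilar_iff.mpr ⟨c⁻¹, inv_ne_zero hc0, g, fun x => ?_⟩
  have hgx : σ (g x) = τ x * c := congr($hc x)
  simp only [smulRight_apply, map_smul, hgs, hgx, smul_smul]
  rw [mul_left_comm, inv_mul_cancel₀ hc0, mul_one]

end LinearMap

open LinearMap

namespace AlmostAbelian

variable {K : Type*} [Field K] {n : ℕ} {D D' : (Fin n → K) →ₗ[K] (Fin n → K)}

theorem mk_eq_add_smul (w : Fin n → K) (a : K) :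
    (mk w a : AlmostAbelian K n D) = mk w 0 + a • mk 0 1 :=
  ext' (by simp) (by simp)

theorem lie_mk_zero_mk_zero (w z : Fin n → K) :
    ⁅(mk w 0 : AlmostAbelian K n D), (mk z 0 : AlmostAbelian K n D)⁆ = 0 :=
  ext' (by simp) (by simp)

theorem lie_mk_zero_one_mk_zero (w : Fin n → K) :
    ⁅(mk 0 1 : AlmostAbelian K n D), (mk w 0 : AlmostAbelian K n D)⁆ = mk (D w) 0 :=
  ext' (by simp) (by simp)

def lieEquivOfIntertwining {α : K} (hα : α ≠ 0) (Ψ : (Fin n → K) ≃ₗ[K] (Fin n → K))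
    (h : ∀ x, Ψ (D x) = α • D' (Ψ x)) : AlmostAbelian K n D ≃ₗ⁅K⁆ AlmostAbelian K n D' :=
  { (Ψ.prodCongr (LinearEquiv.smulOfNeZero K K α hα) :
      ((Fin n → K) × K) ≃ₗ[K] ((Fin n → K) × K)) with
    map_lie' := fun {x y} => ext' (by
      change Ψ (v ⁅x, y⁆) = (α * t x) • D' (Ψ (v y)) - (α * t y) • D' (Ψ (v x))
      simp only [v_lie, map_sub, map_smul, h, smul_smul, mul_comm]) (mul_zero α) }

variable (f : AlmostAbelian K n D ≃ₗ⁅K⁆ AlmostAbelian K n D')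

def blockV : (Fin n → K) →ₗ[K] (Fin n → K) :=
  LinearMap.fst K (Fin n → K) K ∘ₗ f.toLinearEquiv.toLinearMap ∘ₗ LinearMap.inl K (Fin n → K) K

def blockT : (Fin n → K) →ₗ[K] K :=
  LinearMap.snd K (Fin n → K) K ∘ₗ f.toLinearEquiv.toLinearMap ∘ₗ LinearMap.inl K (Fin n → K) K

theorem map_mk_zero (w : Fin n → K) : f (mk w 0) = mk (blockV f w) (blockT f w) := rfl

theorem map_mk (w : Fin n → K) (a : K) : f (mk w a) = f (mk w 0) + a • f (mk 0 1) := by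
  rw [mk_eq_add_smul w a, map_add, map_smul]

theorem map_mk_apply (w : Fin n → K) : f (mk (D w) 0) = ⁅f (mk 0 1), f (mk w 0)⁆ := by
  rw [← lie_mk_zero_one_mk_zero, LieEquiv.map_lie]

theorem blockT_comp_eq_zero : blockT f ∘ₗ D = 0 :=
  LinearMap.ext fun w => congrArg t (map_mk_apply f w)

theorem proportionallySimilar_of_blockT_eq_zero (h : blockT f = 0) :
    D.ProportionallySimilar D' := by
  have hf (w : Fin n → K) : f (mk w 0) = mk (blockV f w) 0 := by
    rw [map_mk_zero, h, LinearMap.zero_apply]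
  have hinj : Function.Injective (blockV f) := fun w z hwz =>
    congrArg v (f.injective (show f (mk w 0) = f (mk z 0) by rw [hf, hf, hwz]))
  have hc : t (f (mk 0 1)) ≠ 0 := by
    intro hc
    obtain ⟨x, hx⟩ := f.surjective (mk 0 1)
    have : t (f (mk (v x) (t x))) = 1 := congrArg t hx
    rw [map_mk, hf] at this
    simp [hc] at this
  refine proportionallySimilar_iff.mpr
    ⟨_, hc, LinearEquiv.ofInjectiveEndo _ hinj, fun w => ?_⟩
  simpa [hf] using congrArg v (map_mk_apply f w)

theorem ker_blockT_le_ker (h : blockT f ≠ 0) : ker (blockT f) ≤ ker D := by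
  obtain ⟨w₀, hw₀⟩ : ∃ w₀, blockT f w₀ ≠ 0 := DFunLike.ne_iff.mp h
  intro z hz
  have hfz : f (mk z 0) = mk (blockV f z) 0 := by rw [map_mk_zero, LinearMap.mem_ker.mp hz]
  have hD'z : D' (blockV f z) = 0 := by
    have := congrArg v (f.map_lie (mk w₀ 0) (mk z 0))
    rw [lie_mk_zero_mk_zero, map_zero, hfz, map_mk_zero] at this
    simpa [hw₀] using this.symm
  have : f (mk (D z) 0) = f 0 := by
    rw [map_mk_apply, hfz, map_zero]
    exact ext' (by simp [hD'z]) (by simp)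
  simpa using congrArg v (f.injective this)

theorem proportionallySimilar_or_eq_smulRight
    (f : AlmostAbelian K n D ≃ₗ⁅K⁆ AlmostAbelian K n D') (hD : D ≠ 0) :
    D.ProportionallySimilar D' ∨ ∃ (τ : (Fin n → K) →ₗ[K] K) (s : Fin n → K),
      τ ≠ 0 ∧ s ≠ 0 ∧ τ s = 0 ∧ D = τ.smulRight s := by
  by_cases h : blockT f = 0
  · exact .inl (proportionallySimilar_of_blockT_eq_zero f h)
  obtain ⟨s, hs⟩ := exists_eq_smulRight_of_ker_le (ker_blockT_le_ker f h)
  refine .inr ⟨blockT f, s, h, ?_, ?_, hs⟩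
  · rintro rfl
    exact hD (by rw [hs, smulRight_zero])
  · obtain ⟨w, hw⟩ : ∃ w, blockT f w ≠ 0 := DFunLike.ne_iff.mp h
    have : blockT f w * blockT f s = 0 := by
      simpa [hs] using congr($(blockT_comp_eq_zero f) w)
    exact (mul_eq_zero.mp this).resolve_left hw

end AlmostAbelian

theorem almostAbelian_iso_iff_proportionally_similar_general
    (K : Type*) [Field K] (n : ℕ)
    (D D' : (Fin n → K) →ₗ[K] (Fin n → K)) (hD : D ≠ 0) (hD' : D' ≠ 0) :
    Nonempty (AlmostAbelian K n D ≃ₗ⁅K⁆ AlmostAbelian K n D') ↔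
      ∃ α : K, α ≠ 0 ∧ ∃ Φ : (Fin n → K) ≃ₗ[K] (Fin n → K),
        α • D' = Φ.symm.toLinearMap ∘ₗ D ∘ₗ Φ.toLinearMap := by
  change _ ↔ D.ProportionallySimilar D'
  refine ⟨fun ⟨f⟩ => ?_, fun h => ?_⟩
  · obtain h | ⟨τ, s, hτ, hs, hτs, rfl⟩ :=
      AlmostAbelian.proportionallySimilar_or_eq_smulRight f hD
    · exact h
    obtain h | ⟨σ, p, hσ, hp, hσp, rfl⟩ :=
      AlmostAbelian.proportionallySimilar_or_eq_smulRight f.symm hD'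
    · exact h.symm
    exact proportionallySimilar_smulRight hτ hσ hs hp hτs hσp
  · obtain ⟨α, hα, Ψ, hΨ⟩ := proportionallySimilar_iff.mp h
    exact ⟨AlmostAbelian.lieEquivOfIntertwining hα Ψ hΨ⟩

/-- two almost abelian Lie algebras `Kⁿ ⋊_D K·e₀` and `Kⁿ ⋊_{D′} K·e₀′`
are isomorphic iff `D` and `D′` are proportionally similar, i.e. `α • D′ = Φ⁻¹ ∘ D ∘ Φ`
for some nonzero scalar `α` and some `Φ ∈ GL_n(K)`. -/
theorem almostAbelian_iso_iff_proportionally_similar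
    (K : Type*) [Field K] [CharZero K] (n : ℕ)
    (D D' : (Fin n → K) →ₗ[K] (Fin n → K)) (hD : D ≠ 0) (hD' : D' ≠ 0) :
    Nonempty (AlmostAbelian K n D ≃ₗ⁅K⁆ AlmostAbelian K n D') ↔
      ∃ α : K, α ≠ 0 ∧ ∃ Φ : (Fin n → K) ≃ₗ[K] (Fin n → K),
        α • D' = Φ.symm.toLinearMap ∘ₗ D ∘ₗ Φ.toLinearMap :=
  almostAbelian_iso_iff_proportionally_similar_general K n D D' hD hD'
end
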